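/- Let J be a graph admitting a proper k-coloring φ such that for every pair of distinct colors a, b used by φ, the subgraph of J induced by the vertices colored a or b is connected (a 'frozen' coloring). Let J′ be obtained from J by adding a new vertex v adjacent to every vertex of J, and extend φ to a (k+1)-coloring φ′ of J′ by giving v a new color. Then for every pair of distinct colors a, b used by φ′, the subgraph of J′ induced by the vertices colored a or b under φ′ is connected. -/

import Mathlib

open SimpleGraph

/-- The spanning subgraph of `G` consisting of the edges both of whose endpoints
receive color `i` or color `j` under `φ`. -/
def kempeSubgraph {V : Type*} (G : SimpleGraph V) {k : ℕ} (φ : V → Fin k) (i j : Fin k) :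
    SimpleGraph V where
  Adj u v := G.Adj u v ∧ (φ u = i ∨ φ u = j) ∧ (φ v = i ∨ φ v = j)
  symm := ⟨fun u v ⟨h, hu, hv⟩ => ⟨h.symm, hv, hu⟩⟩
  loopless := ⟨fun v h => h.1.ne rfl⟩

/-- `ψ` is obtained from `φ` by a single `i,j`-Kempe swap:  the colors `i` and `j` are
interchanged on the connected component (of the subgraph induced by colors `i,j`)
containing `w`, and nothing else changes. -/
def IsKempeSwap {V : Type*} (G : SimpleGraph V) {k : ℕ}
    (φ ψ : G.Coloring (Fin k)) : Prop :=
  ∃ (i j : Fin k) (w : V), ∀ v : V,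
    ((kempeSubgraph G (fun x => φ x) i j).Reachable w v → ψ v = Equiv.swap i j (φ v)) ∧
    (¬ (kempeSubgraph G (fun x => φ x) i j).Reachable w v → ψ v = φ v)

/-- Kempe `k`-equivalence of proper `k`-colorings:  one can be transformed into the
other by a sequence of Kempe swaps. -/
def KempeEquiv {V : Type*} (G : SimpleGraph V) (k : ℕ)
    (φ ψ : G.Coloring (Fin k)) : Prop :=
  Relation.EqvGen (IsKempeSwap G) φ ψ

/-- `Kc G k` is the number of Kempe equivalence classes of proper `k`-colorings of `G`. -/
noncomputable def Kc {V : Type*} (G : SimpleGraph V) (k : ℕ) : ℕ :=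
  Nat.card (Quot (KempeEquiv G k))

/-- `G` can be obtained from a bipartite graph by adding `ℓ` edges. -/
def BipartitePlus {V : Type*} (G : SimpleGraph V) (ℓ : ℕ) : Prop :=
  ∃ E : Finset (Sym2 V), E.card = ℓ ∧ ↑E ⊆ G.edgeSet ∧
    (G.deleteEdges ↑E).Colorable 2

/-- The graph obtained from `J` by adding a new dominating vertex (`none`). -/
def addDominating {V : Type*} (J : SimpleGraph V) : SimpleGraph (Option V) where
  Adj u v := u ≠ v ∧ ∀ a b : V, u = some a → v = some b → J.Adj a b
  symm := by
    constructor
    rintro u v ⟨hne, h⟩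
    exact ⟨hne.symm, fun a b ha hb => (h b a hb ha).symm⟩
  loopless := ⟨fun u h => h.1 rfl⟩

/-! If one of the two colors is the new one, its class contains the dominating vertex, which is
adjacent to every other vertex. Otherwise the two color classes lie in `J`, and the inclusion
`J →g addDominating J` maps the connected subgraph they induce in `J` onto the one in
`addDominating J`. -/

namespace SimpleGraph

variable {V W : Type*}

theorem Connected.induce_image {G : SimpleGraph V} {H : SimpleGraph W} (f : G →g H) {s : Set V}
    (h : (G.induce s).Connected) : (H.induce (f '' s)).Connected :=
  h.map (induceHom f (Set.mapsTo_image f s)) fun ⟨_, x, hx, hfx⟩ => ⟨⟨x, hx⟩, Subtype.ext hfx⟩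

variable (J : SimpleGraph V)

theorem addDominating_adj_none (v : V) : (addDominating J).Adj none (some v) :=
  ⟨Option.some_ne_none v ∘ Eq.symm, fun _ _ h => by cases h⟩

def addDominatingIncl : J →g addDominating J where
  toFun := some
  map_rel' h := ⟨fun e => h.ne (Option.some_injective _ e), by rintro _ _ ⟨⟩ ⟨⟩; exact h⟩

theorem connected_induce_addDominating_of_none_mem {S : Set (Option V)} (h : none ∈ S) :
    ((addDominating J).induce S).Connected := by
  rw [connected_iff_exists_forall_reachable]
  refine ⟨⟨none, h⟩, ?_⟩
  rintro ⟨_ | v, hv⟩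
  · rfl
  · exact Adj.reachable (addDominating_adj_none J v)

end SimpleGraph

section ExtendColoring

variable {V : Type*} {k : ℕ} {φ : V → Fin k} {φ' : Option V → Fin (k + 1)}
  (hsome : ∀ v : V, φ' (some v) = Fin.castSucc (φ v)) (hnone : φ' none = Fin.last k)
include hsome hnone

theorem mem_range_of_castSucc_mem_range_extend {a : Fin k} (ha : a.castSucc ∈ Set.range φ') :
    a ∈ Set.range φ := by
  obtain ⟨_ | v, hv⟩ := ha
  · exact absurd (hnone.symm.trans hv) (Fin.castSucc_ne_last a).symm
  · exact ⟨v, Fin.castSucc_injective k ((hsome v).symm.trans hv)⟩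

theorem setOf_extend_eq_castSucc_or_eq_castSucc (a b : Fin k) :
    {v | φ' v = a.castSucc ∨ φ' v = b.castSucc} = some '' {v | φ v = a ∨ φ v = b} := by
  ext (_ | v)
  · simp [hnone, (Fin.castSucc_ne_last _).symm]
  · simp [hsome]

end ExtendColoring

/-- If `φ` is a frozen `k`-coloring of `J` (each pair of used color classes induces a
connected subgraph) and `φ'` extends `φ` to `J' = J` plus a dominating vertex, with
the new vertex getting the new color, then `φ'` is frozen as well. -/
theorem stmt13 {V : Type*} (J : SimpleGraph V) (k : ℕ) (φ : J.Coloring (Fin k))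
    (hfrozen : ∀ a b : Fin k, a ≠ b →
      a ∈ Set.range (fun v => φ v) → b ∈ Set.range (fun v => φ v) →
      (J.induce {v : V | φ v = a ∨ φ v = b}).Connected)
    (φ' : Option V → Fin (k + 1))
    (hsome : ∀ v : V, φ' (some v) = Fin.castSucc (φ v))
    (hnone : φ' none = Fin.last k) :
    ∀ a b : Fin (k + 1), a ≠ b → a ∈ Set.range φ' → b ∈ Set.range φ' →
      ((addDominating J).induce {v : Option V | φ' v = a ∨ φ' v = b}).Connected := by
  intro a b hab ha hb
  by_cases hlast : φ' none = a ∨ φ' none = b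
  · exact connected_induce_addDominating_of_none_mem J hlast
  push Not at hlast
  obtain ⟨a, rfl⟩ := Fin.exists_castSucc_eq.2 (hnone ▸ hlast.1).symm
  obtain ⟨b, rfl⟩ := Fin.exists_castSucc_eq.2 (hnone ▸ hlast.2).symm
  rw [setOf_extend_eq_castSucc_or_eq_castSucc hsome hnone]
  exact (hfrozen a b (ne_of_apply_ne _ hab) (mem_range_of_castSucc_mem_range_extend hsome hnone ha)
    (mem_range_of_castSucc_mem_range_extend hsome hnone hb)).induce_image (addDominatingIncl J)
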